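/- arXiv:2210.02001 — 3 statements merged into one kernel-verified Lean document; each statement's English description precedes it below -/
import Mathlib

section
/- Let A, B be real numbers with A ≠ 0. If U ∈ ℝ⟦w⟧ is any formal power series satisfying U = (A + B·U²)·w, then U = Σ_{i=0}^∞ c_i A^{i+1} B^i w^{2i+1}; that is, the coefficient of w^{2i+1} in U equals c_i A^{i+1} B^i for every i ≥ 0, and every even-degree coefficient of U is zero. In particular the formal power series solution of u = (A + Bu²)w is unique. -/
/-! Two solutions `U`, `V` of `U = (A + B U²) X` satisfy `U - V = (U - V) · B (U + V) X`, and
`1 - B (U + V) X` is a unit, so `U = V`. Since the Catalan generating function satisfies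
`K = 1 + X K²`, the series `A X K(A B X²)` is a solution, and its coefficients are read off
directly. -/

namespace PowerSeries

variable {R : Type*} [CommRing R]

theorem eq_zero_of_eq_mul_of_constantCoeff_eq_zero {D E : R⟦X⟧} (hE : constantCoeff E = 0)
    (h : D = D * E) : D = 0 := by
  have hunit : IsUnit (1 - E) := isUnit_iff_constantCoeff.mpr (by simp [hE])
  rw [← hunit.mul_left_eq_zero, mul_sub, mul_one, ← h, sub_self]

theorem eq_of_eq_C_add_C_mul_sq_mul_X {A B : R} {U V : R⟦X⟧}
    (hU : U = (C A + C B * U ^ 2) * X) (hV : V = (C A + C B * V ^ 2) * X) : U = V := by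
  refine sub_eq_zero.mp (eq_zero_of_eq_mul_of_constantCoeff_eq_zero (E := C B * (U + V) * X)
    (by simp) ?_)
  conv_lhs => rw [hU, hV]
  ring

theorem rescale_map_catalanSeries_eq (c : R) :
    rescale c (map (Nat.castRingHom R) catalanSeries)
      = 1 + C c * X * rescale c (map (Nat.castRingHom R) catalanSeries) ^ 2 := by
  conv_lhs => rw [← catalanSeries_sq_mul_X_add_one]
  simp only [map_add, map_mul, map_pow, map_X, map_one, rescale_X]
  ring

noncomputable def catalanSolution (A B : R) : R⟦X⟧ :=
  C A * X * expand 2 two_ne_zero (rescale (A * B) (map (Nat.castRingHom R) catalanSeries))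

theorem catalanSolution_eq (A B : R) :
    catalanSolution A B = (C A + C B * catalanSolution A B ^ 2) * X := by
  have hK := congrArg (expand 2 two_ne_zero) (rescale_map_catalanSeries_eq (A * B))
  simp only [map_add, map_mul, map_pow, map_one, expand_C, expand_X] at hK
  rw [catalanSolution]
  conv_lhs => rw [hK]
  ring

theorem coeff_catalanSolution_odd (A B : R) (i : ℕ) :
    coeff (2 * i + 1) (catalanSolution A B) = catalan i * A ^ (i + 1) * B ^ i := by
  rw [catalanSolution, mul_assoc, coeff_C_mul, coeff_succ_X_mul, coeff_expand_mul, coeff_rescale,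
    coeff_map, catalanSeries_coeff]
  simp only [eq_natCast]
  ring

theorem coeff_catalanSolution_even (A B : R) (i : ℕ) :
    coeff (2 * i) (catalanSolution A B) = 0 := by
  rw [catalanSolution, mul_assoc, coeff_C_mul]
  cases i with
  | zero => rw [mul_zero, coeff_zero_X_mul, mul_zero]
  | succ k =>
    rw [Nat.mul_succ, coeff_succ_X_mul, coeff_expand_of_not_dvd _ _ _ (by omega), mul_zero]

end PowerSeries

theorem catalan_powerSeries_solution_unique_general (A B : ℝ)
    (U : PowerSeries ℝ)
    (hU : U = (PowerSeries.C A + PowerSeries.C B * U ^ 2) * PowerSeries.X) :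
    (∀ i : ℕ, PowerSeries.coeff (2 * i + 1) U =
        (catalan i : ℝ) * A ^ (i + 1) * B ^ i) ∧
    (∀ i : ℕ, PowerSeries.coeff (2 * i) U = 0) := by
  obtain rfl := PowerSeries.eq_of_eq_C_add_C_mul_sq_mul_X hU (PowerSeries.catalanSolution_eq A B)
  exact ⟨PowerSeries.coeff_catalanSolution_odd A B, PowerSeries.coeff_catalanSolution_even A B⟩

/-- For real `A ≠ 0` and `B`, any formal power series `U ∈ ℝ⟦w⟧`
satisfying `U = (A + B·U²)·w` has coefficient of `w^{2i+1}` equal to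
`c_i A^{i+1} B^i` for every `i`, and all even-degree coefficients zero;
in particular the formal power series solution is unique. -/
theorem catalan_powerSeries_solution_unique (A B : ℝ) (hA : A ≠ 0)
    (U : PowerSeries ℝ)
    (hU : U = (PowerSeries.C A + PowerSeries.C B * U ^ 2) * PowerSeries.X) :
    (∀ i : ℕ, PowerSeries.coeff (2 * i + 1) U =
        (catalan i : ℝ) * A ^ (i + 1) * B ^ i) ∧
    (∀ i : ℕ, PowerSeries.coeff (2 * i) U = 0) :=
  catalan_powerSeries_solution_unique_general A B U hU
end

section
/- Let A, B be nonzero real numbers. The real power series Σ_{i=0}^∞ c_i A^{i+1} B^i w^{2i+1} (viewed as a power series in w whose coefficient of w^{2i+1} is c_i A^{i+1} B^i and whose even-degree coefficients vanish) has radius of convergence exactly 1/(2√(|A·B|)). -/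
/-!
With `q = |A B| w²`, the `i`-th term has absolute value `|A| |w| cᵢ qⁱ`. Since
`4ⁿ / (2n(n+1)) ≤ cₙ ≤ 4ⁿ`, the series is dominated by `Σ (4q)ⁱ` when `q < 1/4`, while
for `q > 1/4` the exponential growth of `(4q)ⁱ` beats the polynomial loss, so the terms
do not tend to zero. The threshold `q = 1/4` is exactly `|w| = 1/(2√|A B|)`.
-/

open Filter Topology

theorem catalan_le_four_pow (n : ℕ) : (catalan n : ℝ) ≤ 4 ^ n := by
  have h : catalan n ≤ 4 ^ n :=
    calc catalan n ≤ (n + 1) * catalan n := Nat.le_mul_of_pos_left _ n.succ_pos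
      _ = n.centralBinom := succ_mul_catalan_eq_centralBinom n
      _ ≤ 4 ^ n := Nat.centralBinom_le_four_pow n
  exact_mod_cast h

theorem four_pow_le_catalan {n : ℕ} (hn : 0 < n) :
    (4 : ℝ) ^ n ≤ 2 * n * (n + 1) * catalan n := by
  have h := Nat.four_pow_le_two_mul_self_mul_centralBinom n hn
  rw [← succ_mul_catalan_eq_centralBinom, ← mul_assoc] at h
  exact_mod_cast h

theorem summable_catalan_mul_pow {q : ℝ} (hq₀ : 0 ≤ q) (hq : q < 1 / 4) :
    Summable fun n => (catalan n : ℝ) * q ^ n := by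
  refine (summable_geometric_of_lt_one (by positivity) (by linarith : 4 * q < 1)).of_nonneg_of_le
    (fun n => by positivity) fun n => ?_
  rw [mul_pow]
  exact mul_le_mul_of_nonneg_right (catalan_le_four_pow n) (pow_nonneg hq₀ n)

theorem not_tendsto_catalan_mul_pow_zero {q : ℝ} (hq : 1 / 4 < q) :
    ¬Tendsto (fun n => (catalan n : ℝ) * q ^ n) atTop (𝓝 0) := by
  intro h
  have hpoly := tendsto_pow_const_div_const_pow_of_one_lt 2 (by linarith : 1 < 4 * q)
  -- The product of the two null sequences is `catalan n * n ^ 2 / 4 ^ n ≥ 1 / 4`.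
  have hprod := (zero_mul (0 : ℝ) ▸ h.mul hpoly).eventually_lt_const
    (by norm_num : (0 : ℝ) < 1 / 4)
  obtain ⟨n, hn, hlt⟩ := ((eventually_gt_atTop 0).and hprod).exists
  have hq₀ : q ≠ 0 := by positivity
  have hcancel : (catalan n : ℝ) * q ^ n * (n ^ 2 / (4 * q) ^ n) = catalan n * n ^ 2 / 4 ^ n := by
    rw [mul_pow]; field_simp
  rw [hcancel, div_lt_iff₀ (by positivity)] at hlt
  have hcat := four_pow_le_catalan hn
  have hn1 : (1 : ℝ) ≤ n := by exact_mod_cast hn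
  nlinarith [mul_nonneg (sub_nonneg.2 hn1) (Nat.cast_nonneg (catalan n) : (0 : ℝ) ≤ catalan n)]

theorem lt_one_div_two_mul_sqrt_iff {m x : ℝ} (hm : 0 < m) (hx : 0 ≤ x) :
    x < 1 / (2 * √m) ↔ m * x ^ 2 < 1 / 4 := by
  rw [lt_div_iff₀ (by positivity), ← sq_lt_one_iff₀ (by positivity), mul_pow, mul_pow,
    Real.sq_sqrt hm.le]
  constructor <;> intro h <;> linarith

theorem one_div_two_mul_sqrt_lt_iff {m x : ℝ} (hm : 0 < m) (hx : 0 ≤ x) :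
    1 / (2 * √m) < x ↔ 1 / 4 < m * x ^ 2 := by
  rw [div_lt_iff₀ (by positivity), ← one_lt_sq_iff₀ (by positivity), mul_pow, mul_pow,
    Real.sq_sqrt hm.le]
  constructor <;> intro h <;> linarith

def catalanOddTerm (A B w : ℝ) (i : ℕ) : ℝ :=
  catalan i * A ^ (i + 1) * B ^ i * w ^ (2 * i + 1)

theorem abs_catalanOddTerm (A B w : ℝ) (i : ℕ) :
    |catalanOddTerm A B w i| = |A| * |w| * (catalan i * (|A * B| * w ^ 2) ^ i) := by
  rw [catalanOddTerm, abs_mul, abs_mul, abs_mul, abs_pow, abs_pow, abs_pow, Nat.abs_cast,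
    abs_mul A B, ← sq_abs w, mul_pow, mul_pow, ← pow_mul]
  ring

theorem summable_catalanOddTerm (A B : ℝ) {w : ℝ} (hw : |A * B| * w ^ 2 < 1 / 4) :
    Summable (catalanOddTerm A B w) := by
  rw [← summable_abs_iff]
  simp_rw [abs_catalanOddTerm]
  exact (summable_catalan_mul_pow (by positivity) hw).mul_left _

theorem not_summable_catalanOddTerm {A : ℝ} (B : ℝ) {w : ℝ} (hA : A ≠ 0)
    (hw : 1 / 4 < |A * B| * w ^ 2) : ¬Summable (catalanOddTerm A B w) := by
  have hw₀ : w ≠ 0 := by rintro rfl; norm_num at hw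
  rw [← summable_abs_iff]
  simp_rw [abs_catalanOddTerm]
  rw [summable_mul_left_iff (by positivity)]
  exact fun h => not_tendsto_catalan_mul_pow_zero hw h.tendsto_atTop_zero

/-- For nonzero reals `A, B`, the radius of convergence of the power
series `Σ_{i=0}^∞ c_i A^{i+1} B^i w^{2i+1}` is exactly `1/(2√|A·B|)`; that is,
`1/(2√|A·B|)` is the least upper bound of the set of `|w|` for which the series
converges. -/
theorem catalan_series_radius_of_convergence (A B : ℝ) (hA : A ≠ 0) (hB : B ≠ 0) :
    IsLUB {x : ℝ | ∃ w : ℝ, |w| = x ∧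
        Summable (fun i : ℕ =>
          (catalan i : ℝ) * A ^ (i + 1) * B ^ i * w ^ (2 * i + 1))}
      (1 / (2 * Real.sqrt |A * B|)) := by
  have hm : 0 < |A * B| := abs_pos.2 (mul_ne_zero hA hB)
  refine (isLUB_Ico (by positivity)).of_subset_of_superset isLUB_Iic ?_ ?_
  · rintro x ⟨hx₀, hx⟩
    exact ⟨x, abs_of_nonneg hx₀,
      summable_catalanOddTerm A B ((lt_one_div_two_mul_sqrt_iff hm hx₀).1 hx)⟩
  · rintro _ ⟨w, rfl, hsum⟩
    by_contra hw
    rw [Set.mem_Iic, not_le, one_div_two_mul_sqrt_lt_iff hm (abs_nonneg w), sq_abs] at hw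
    exact not_summable_catalanOddTerm B hA hw hsum
end

section
/- Let A, B be nonzero real numbers and let w be a real number with 0 < |w| < 1/(2√(|A·B|)). Then Σ_{i=0}^∞ c_i A^{i+1} B^i w^{2i+1} = (1 − √(1 − 4·A·B·w²))/(2·B·w). (Note that 1 − 4ABw² > 0 under the stated hypothesis, so the square root is the real square root.) -/
/-!
Put `x = A B w²`, so that the series is `A w · C(x)` with `C(x) = ∑ cₙ xⁿ` and `|x| < 1/4`.
The Catalan recurrence is a Cauchy-product identity, giving `C = 1 + x C²`, hence
`(1 - 2 x C)² = 1 - 4 x`. The root is the nonnegative one because `|C(x)| ≤ C(1/4) = 2`: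
the partial sums of `C(1/4)` telescope to `2 - 2 binom(2N, N) / 4ᴺ`.
-/

open Finset

theorem Nat.centralBinom_succ_add_two_mul_catalan (n : ℕ) :
    centralBinom (n + 1) + 2 * catalan n = 4 * centralBinom n := by
  refine Nat.eq_of_mul_eq_mul_left n.succ_pos ?_
  calc (n + 1) * (centralBinom (n + 1) + 2 * catalan n)
      = (n + 1) * centralBinom (n + 1) + 2 * ((n + 1) * catalan n) := by ring
    _ = (n + 1) * (4 * centralBinom n) := by
      rw [succ_mul_centralBinom_succ, succ_mul_catalan_eq_centralBinom]; ring

theorem sum_range_catalan_div_four_pow (N : ℕ) :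
    ∑ n ∈ range N, (catalan n : ℝ) / 4 ^ n = 2 - 2 * N.centralBinom / 4 ^ N := by
  have step (n : ℕ) : (catalan n : ℝ) / 4 ^ n =
      2 * (n.centralBinom / 4 ^ n) - 2 * ((n + 1).centralBinom / 4 ^ (n + 1)) := by
    have h : ((n + 1).centralBinom : ℝ) + 2 * catalan n = 4 * n.centralBinom := by
      exact_mod_cast Nat.centralBinom_succ_add_two_mul_catalan n
    rw [pow_succ]
    field_simp
    linear_combination 2 * h
  simp_rw [step, ← mul_sub, ← mul_sum, sum_range_sub', Nat.centralBinom_zero]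
  ring

theorem sum_range_catalan_mul_pow_le_two {r : ℝ} (hr₀ : 0 ≤ r) (hr : r ≤ 1 / 4) (N : ℕ) :
    ∑ n ∈ range N, (catalan n : ℝ) * r ^ n ≤ 2 :=
  calc ∑ n ∈ range N, (catalan n : ℝ) * r ^ n
      ≤ ∑ n ∈ range N, (catalan n : ℝ) / 4 ^ n := by
        gcongr with n
        rw [div_eq_mul_inv, ← inv_pow]
        gcongr
        linarith
    _ = 2 - 2 * N.centralBinom / 4 ^ N := sum_range_catalan_div_four_pow N
    _ ≤ 2 := by linarith [show 0 ≤ 2 * (N.centralBinom : ℝ) / 4 ^ N by positivity]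

section CatalanSeries

variable {x : ℝ} (hx : |x| ≤ 1 / 4)
include hx

theorem summable_norm_catalan_mul_pow : Summable fun n ↦ ‖(catalan n : ℝ) * x ^ n‖ := by
  simp_rw [norm_mul, norm_pow, Real.norm_natCast, Real.norm_eq_abs]
  exact summable_of_sum_range_le (fun _ ↦ by positivity)
    (sum_range_catalan_mul_pow_le_two (abs_nonneg x) hx)

theorem abs_tsum_catalan_mul_pow_le_two : |∑' n, (catalan n : ℝ) * x ^ n| ≤ 2 := by
  refine (norm_tsum_le_tsum_norm (summable_norm_catalan_mul_pow hx)).trans ?_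
  simp_rw [norm_mul, norm_pow, Real.norm_natCast, Real.norm_eq_abs]
  exact Real.tsum_le_of_sum_range_le (fun _ ↦ by positivity)
    (sum_range_catalan_mul_pow_le_two (abs_nonneg x) hx)

theorem tsum_catalan_mul_pow_eq_one_add :
    ∑' n, (catalan n : ℝ) * x ^ n = 1 + x * (∑' n, (catalan n : ℝ) * x ^ n) ^ 2 := by
  have hsum := summable_norm_catalan_mul_pow hx
  have cauchy_product : (∑' n, (catalan n : ℝ) * x ^ n) ^ 2 =
      ∑' n, (catalan (n + 1) : ℝ) * x ^ n := by
    rw [sq, tsum_mul_tsum_eq_tsum_sum_antidiagonal_of_summable_norm hsum hsum]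
    refine tsum_congr fun n ↦ ?_
    rw [catalan_succ', Nat.cast_sum, sum_mul]
    refine sum_congr rfl fun ij hij ↦ ?_
    rw [← HasAntidiagonal.mem_antidiagonal.mp hij]
    push_cast
    ring
  rw [cauchy_product, ← tsum_mul_left, (summable_norm_iff.mp hsum).tsum_eq_zero_add]
  simp [pow_succ', mul_comm, mul_assoc]

theorem sqrt_one_sub_four_mul_eq :
    √(1 - 4 * x) = 1 - 2 * x * ∑' n, (catalan n : ℝ) * x ^ n := by
  set C := ∑' n, (catalan n : ℝ) * x ^ n
  have hquad : C = 1 + x * C ^ 2 := tsum_catalan_mul_pow_eq_one_add hx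
  have hroot_nonneg : 0 ≤ 1 - 2 * x * C := by
    have : |2 * x * C| ≤ 1 := by
      rw [abs_mul, abs_mul, abs_two]
      nlinarith [abs_tsum_catalan_mul_pow_le_two hx, abs_nonneg x, abs_nonneg C]
    linarith [le_abs_self (2 * x * C)]
  rw [show 1 - 4 * x = (1 - 2 * x * C) ^ 2 by linear_combination 4 * x * hquad,
    Real.sqrt_sq hroot_nonneg]

end CatalanSeries

theorem four_mul_abs_mul_sq_lt_one {a w : ℝ} (hw : |w| < 1 / (2 * √|a|)) :
    4 * |a * w ^ 2| < 1 := by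
  have hpos : 0 < 2 * √|a| := one_div_pos.mp ((abs_nonneg w).trans_lt hw)
  have h : 2 * √|a| * |w| < 1 := by rwa [lt_div_iff₀ hpos, mul_comm] at hw
  calc 4 * |a * w ^ 2| = (2 * √|a| * |w|) ^ 2 := by
        rw [mul_pow, mul_pow, Real.sq_sqrt (abs_nonneg a), sq_abs, abs_mul, abs_pow, sq_abs]
        ring
    _ < 1 := by nlinarith [show 0 ≤ 2 * √|a| * |w| by positivity]

theorem catalan_series_closed_form_general (A B w : ℝ) (hB : B ≠ 0)
    (hw0 : 0 < |w|) (hw : |w| < 1 / (2 * Real.sqrt |A * B|)) :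
    (∑' i : ℕ, (catalan i : ℝ) * A ^ (i + 1) * B ^ i * w ^ (2 * i + 1)) =
      (1 - Real.sqrt (1 - 4 * A * B * w ^ 2)) / (2 * B * w) := by
  set x := A * B * w ^ 2
  have hx : |x| ≤ 1 / 4 := by linarith [four_mul_abs_mul_sq_lt_one hw]
  have hterm (i : ℕ) : (catalan i : ℝ) * A ^ (i + 1) * B ^ i * w ^ (2 * i + 1) =
      A * w * ((catalan i : ℝ) * x ^ i) := by
    simp only [x, mul_pow, ← pow_mul]
    ring
  rw [tsum_congr hterm, tsum_mul_left, show 1 - 4 * A * B * w ^ 2 = 1 - 4 * x by ring,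
    sqrt_one_sub_four_mul_eq hx, eq_div_iff (by simp [hB, abs_pos.mp hw0])]
  ring

/-- For nonzero reals `A, B` and real `w` with
`0 < |w| < 1/(2√|A·B|)`, we have
`Σ_{i=0}^∞ c_i A^{i+1} B^i w^{2i+1} = (1 − √(1 − 4ABw²))/(2Bw)`. -/
theorem catalan_series_closed_form (A B w : ℝ) (hA : A ≠ 0) (hB : B ≠ 0)
    (hw0 : 0 < |w|) (hw : |w| < 1 / (2 * Real.sqrt |A * B|)) :
    (∑' i : ℕ, (catalan i : ℝ) * A ^ (i + 1) * B ^ i * w ^ (2 * i + 1)) =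
      (1 - Real.sqrt (1 - 4 * A * B * w ^ 2)) / (2 * B * w) :=
  catalan_series_closed_form_general A B w hB hw0 hw
end
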